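/- arXiv:1206.1757 — 3 statements merged into one kernel-verified Lean document; each statement's English description precedes it below -/
import Mathlib

section
/- The Runge–Lenz vector 𝐀 = 𝛑×𝛍 − γ𝐪/|𝐪| is an integral of motion: along any solution (q(t),v(t)) of the Kepler equations on S³ lying in TS³ with −1 < q0(t) < 1 and 𝐪(t) ≠ 0, the ℝ³-valued function t ↦ 𝐀(q(t),v(t)) is constant. -/
open Matrix Real

noncomputable section

/-- The spatial (last three) components of a vector in `ℝ⁴`. -/
def sp (q : Fin 4 → ℝ) : Fin 3 → ℝ := fun i => q i.succ

/-- The Euclidean norm on `ℝ³`, written via the dot product. -/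
def nrm3 (x : Fin 3 → ℝ) : ℝ := Real.sqrt (x ⬝ᵥ x)

/-- The first standard basis vector `e₀ = (1,0,0,0)` of `ℝ⁴`. -/
def e0 : Fin 4 → ℝ := fun i => if i = 0 then 1 else 0

/-- The (constraint set defining the) tangent bundle `TS³ ⊂ ℝ⁴ × ℝ⁴`. -/
def TS3 : Set ((Fin 4 → ℝ) × (Fin 4 → ℝ)) :=
  {p | p.1 ⬝ᵥ p.1 = 1 ∧ p.1 ⬝ᵥ p.2 = 0}

/-- Right hand side of the Kepler equations of motion on `S³`:
`v̇ = γ e₀/(1-q₀²)^{3/2} - (⟨v,v⟩ + γ q₀/(1-q₀²)^{3/2}) q`. -/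
def keplerRHS (γ : ℝ) (q v : Fin 4 → ℝ) : Fin 4 → ℝ :=
  (γ / (1 - q 0 ^ 2) ^ ((3 : ℝ) / 2)) • e0
    - (v ⬝ᵥ v + γ * q 0 / (1 - q 0 ^ 2) ^ ((3 : ℝ) / 2)) • q

/-- The Kepler Hamiltonian on `S³`: `H = ½⟨v,v⟩ - γ q₀ / (1-q₀²)^{1/2}`. -/
def Hham (γ : ℝ) (p : (Fin 4 → ℝ) × (Fin 4 → ℝ)) : ℝ :=
  (1 / 2) * (p.2 ⬝ᵥ p.2) - γ * p.1 0 / Real.sqrt (1 - p.1 0 ^ 2)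

/-- The angular momentum `𝛍 = 𝐪 × 𝐯`. -/
def mu (p : (Fin 4 → ℝ) × (Fin 4 → ℝ)) : Fin 3 → ℝ :=
  crossProduct (sp p.1) (sp p.2)

/-- The vector `𝛑 = q₀ 𝐯 - v₀ 𝐪`. -/
def pivec (p : (Fin 4 → ℝ) × (Fin 4 → ℝ)) : Fin 3 → ℝ :=
  p.1 0 • sp p.2 - p.2 0 • sp p.1

/-- The Runge–Lenz vector `𝐀 = 𝛑 × 𝛍 - γ 𝐪/|𝐪|`. -/
def rl (γ : ℝ) (p : (Fin 4 → ℝ) × (Fin 4 → ℝ)) : Fin 3 → ℝ :=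
  crossProduct (pivec p) (mu p) - (γ / nrm3 (sp p.1)) • sp p.1

/-- The energy-like integral `E = H - |𝛍|²/2`. -/
def Een (γ : ℝ) (p : (Fin 4 → ℝ) × (Fin 4 → ℝ)) : ℝ :=
  Hham γ p - (mu p ⬝ᵥ mu p) / 2

/-- `ν = γ / √(-2E)`. -/
def nuLS (γ : ℝ) (p : (Fin 4 → ℝ) × (Fin 4 → ℝ)) : ℝ :=
  γ / Real.sqrt (-2 * Een γ p)

/-! Along the flow the spatial acceleration is parallel to `𝐪`, so `𝛍` is conserved, and since
`|𝐪|² = 1 - q₀²` on `S³` a short computation gives `𝛑̇ = -γ 𝐪 / |𝐪|³`. From there the argument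
is the classical one for the Runge–Lenz vector in `ℝ³`:
`(𝛑 × 𝛍)˙ = -γ 𝐪 × (𝐪 × 𝐯) / |𝐪|³ = γ (|𝐪|² 𝐯 - (𝐪 · 𝐯) 𝐪) / |𝐪|³ = (γ 𝐪 / |𝐪|)˙`.
A curve with zero derivative on a convex set is constant there. -/

theorem HasDerivAt.crossProduct {𝕜 : Type*} [NontriviallyNormedField 𝕜] [CompleteSpace 𝕜]
    {f g : 𝕜 → Fin 3 → 𝕜} {f' g' : Fin 3 → 𝕜} {t : 𝕜}
    (hf : HasDerivAt f f' t) (hg : HasDerivAt g g' t) :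
    HasDerivAt (fun s => f s ⨯₃ g s) (f' ⨯₃ g t + f t ⨯₃ g') t := by
  simpa only [add_comm, LinearMap.toContinuousBilinearMap_apply] using
    (_root_.crossProduct (R := 𝕜)).toContinuousBilinearMap.hasDerivAt_of_bilinear
      (fun _ => hf) fun _ => hg

theorem HasDerivAt.dotProduct {𝕜 ι : Type*} [NontriviallyNormedField 𝕜] [Fintype ι]
    {f g : 𝕜 → ι → 𝕜} {f' g' : ι → 𝕜} {t : 𝕜}
    (hf : HasDerivAt f f' t) (hg : HasDerivAt g g' t) :
    HasDerivAt (fun s => f s ⬝ᵥ g s) (f' ⬝ᵥ g t + f t ⬝ᵥ g') t := by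
  have := HasDerivAt.fun_sum (u := Finset.univ) fun i _ =>
    (hasDerivAt_pi.1 hf i).fun_mul (hasDerivAt_pi.1 hg i)
  simpa only [_root_.dotProduct, ← Finset.sum_add_distrib] using this

theorem dotProduct_self_pos {ι : Type*} [Fintype ι] {x : ι → ℝ} (hx : x ≠ 0) : 0 < x ⬝ᵥ x := by
  refine lt_of_le_of_ne ?_ (Ne.symm (dotProduct_self_eq_zero.not.2 hx))
  simpa using dotProduct_star_self_nonneg x

theorem HasDerivAt.nrm3 {f : ℝ → Fin 3 → ℝ} {f' : Fin 3 → ℝ} {t : ℝ}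
    (hf : HasDerivAt f f' t) (h0 : f t ≠ 0) :
    HasDerivAt (fun s => nrm3 (f s)) ((f t ⬝ᵥ f') / nrm3 (f t)) t := by
  refine ((hf.dotProduct hf).sqrt (dotProduct_self_pos h0).ne').congr_deriv ?_
  rw [dotProduct_comm f', _root_.nrm3]
  ring

/-- With `p = y` and `c = -γ / |x|³` this is the conservation of the classical Runge–Lenz vector. -/
theorem hasDerivAt_rungeLenz_of_centralForce {γ c : ℝ} {x y p : ℝ → Fin 3 → ℝ} {t : ℝ}
    (hx : HasDerivAt x (y t) t) (hy : HasDerivAt y (c • x t) t)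
    (hp : HasDerivAt p (-(γ / nrm3 (x t) ^ 3) • x t) t) (h0 : x t ≠ 0) :
    HasDerivAt (fun s => p s ⨯₃ (x s ⨯₃ y s) - (γ / nrm3 (x s)) • x s) 0 t := by
  have hμ : HasDerivAt (fun s => x s ⨯₃ y s) 0 t :=
    (hx.crossProduct hy).congr_deriv (by rw [cross_self, map_smul, cross_self, smul_zero, add_zero])
  have hn0 : nrm3 (x t) ≠ 0 := (Real.sqrt_pos.2 (dotProduct_self_pos h0)).ne'
  have hxx : x t ⬝ᵥ x t = nrm3 (x t) ^ 2 := (Real.sq_sqrt (dotProduct_self_pos h0).le).symm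
  refine ((hp.crossProduct hμ).fun_sub
    (((hasDerivAt_const t γ).fun_div (hx.nrm3 h0) hn0).fun_smul hx)).congr_deriv ?_
  simp only [map_zero, add_zero, LinearMap.map_smul₂, cross_cross_eq_smul_sub_smul', hxx]
  match_scalars <;> field_simp <;> ring

theorem sp_keplerRHS (γ : ℝ) (q v : Fin 4 → ℝ) :
    sp (keplerRHS γ q v) = -(v ⬝ᵥ v + γ * q 0 / (1 - q 0 ^ 2) ^ ((3 : ℝ) / 2)) • sp q := by
  ext i
  simp only [sp, keplerRHS, Pi.sub_apply, Pi.smul_apply, e0, Fin.succ_ne_zero, ↓reduceIte,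
    smul_eq_mul, mul_zero, zero_sub]
  ring

theorem keplerRHS_zero (γ : ℝ) (q v : Fin 4 → ℝ) :
    keplerRHS γ q v 0 = γ / (1 - q 0 ^ 2) ^ ((3 : ℝ) / 2)
      - (v ⬝ᵥ v + γ * q 0 / (1 - q 0 ^ 2) ^ ((3 : ℝ) / 2)) * q 0 := by
  simp [keplerRHS, e0]

theorem one_sub_sq_eq_sp_dotProduct {q : Fin 4 → ℝ} (hq : q ⬝ᵥ q = 1) :
    1 - q 0 ^ 2 = sp q ⬝ᵥ sp q := by
  rw [← hq, dotProduct, Fin.sum_univ_succ]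
  simp [sp, dotProduct, sq]

theorem one_sub_sq_rpow_three_halves {q : Fin 4 → ℝ} (hq : q ⬝ᵥ q = 1) :
    (1 - q 0 ^ 2) ^ ((3 : ℝ) / 2) = nrm3 (sp q) ^ 3 := by
  have hnonneg : 0 ≤ sp q ⬝ᵥ sp q := by simpa using dotProduct_star_self_nonneg (sp q)
  rw [one_sub_sq_eq_sp_dotProduct hq, nrm3, Real.sqrt_eq_rpow, ← Real.rpow_natCast,
    ← Real.rpow_mul hnonneg]
  norm_num

theorem HasDerivAt.sp {q : ℝ → Fin 4 → ℝ} {q' : Fin 4 → ℝ} {t : ℝ} (hq : HasDerivAt q q' t) :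
    HasDerivAt (fun s => sp (q s)) (sp q') t :=
  hasDerivAt_pi.2 fun i => hasDerivAt_pi.1 hq i.succ

theorem hasDerivAt_pivec {γ t : ℝ} {q v : ℝ → Fin 4 → ℝ} (hq : HasDerivAt q (v t) t)
    (hv : HasDerivAt v (keplerRHS γ (q t) (v t)) t) :
    HasDerivAt (fun s => pivec (q s, v s))
      (-(γ / (1 - q t 0 ^ 2) ^ ((3 : ℝ) / 2)) • sp (q t)) t := by
  refine (((hasDerivAt_pi.1 hq 0).fun_smul hv.sp).fun_sub
    ((hasDerivAt_pi.1 hv 0).fun_smul hq.sp)).congr_deriv ?_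
  rw [sp_keplerRHS, keplerRHS_zero]
  module

theorem hasDerivAt_rl {γ t : ℝ} {q v : ℝ → Fin 4 → ℝ} (hq : HasDerivAt q (v t) t)
    (hv : HasDerivAt v (keplerRHS γ (q t) (v t)) t) (hS3 : q t ⬝ᵥ q t = 1)
    (h0 : sp (q t) ≠ 0) :
    HasDerivAt (fun s => rl γ (q s, v s)) 0 t := by
  refine hasDerivAt_rungeLenz_of_centralForce hq.sp
    (hv.sp.congr_deriv (sp_keplerRHS ..)) ?_ h0
  simpa only [one_sub_sq_rpow_three_halves hS3] using hasDerivAt_pivec hq hv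

theorem Convex.eq_of_forall_hasDerivAt_zero {E : Type*} [NormedAddCommGroup E] [NormedSpace ℝ E]
    {f : ℝ → E} {s : Set ℝ} (hs : Convex ℝ s) (hf : ∀ x ∈ s, HasDerivAt f 0 x)
    {x y : ℝ} (hx : x ∈ s) (hy : y ∈ s) : f x = f y := by
  simpa only [zero_mul, norm_le_zero_iff, sub_eq_zero, eq_comm] using
    hs.norm_image_sub_le_of_norm_hasDerivWithin_le (fun z hz => (hf z hz).hasDerivWithinAt)
      (fun _ _ => norm_zero.le) hx hy

theorem runge_lenz_is_integral_of_motion_general (γ : ℝ) (I : Set ℝ) (hI : Convex ℝ I)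
    (q v : ℝ → Fin 4 → ℝ)
    (hq : ∀ t ∈ I, HasDerivAt q (v t) t)
    (hv : ∀ t ∈ I, HasDerivAt v (keplerRHS γ (q t) (v t)) t)
    (hTS : ∀ t ∈ I, (q t, v t) ∈ TS3)
    (hqnz : ∀ t ∈ I, sp (q t) ≠ 0) :
    ∀ t ∈ I, ∀ s ∈ I, rl γ (q t, v t) = rl γ (q s, v s) := fun _ ht _ hs =>
  hI.eq_of_forall_hasDerivAt_zero
    (fun t ht => hasDerivAt_rl (hq t ht) (hv t ht) (hTS t ht).1 (hqnz t ht)) ht hs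

theorem runge_lenz_is_integral_of_motion (γ : ℝ) (hγ : 0 < γ) (I : Set ℝ) (hI : Convex ℝ I)
    (q v : ℝ → Fin 4 → ℝ)
    (hq : ∀ t ∈ I, HasDerivAt q (v t) t)
    (hv : ∀ t ∈ I, HasDerivAt v (keplerRHS γ (q t) (v t)) t)
    (hTS : ∀ t ∈ I, (q t, v t) ∈ TS3)
    (hq0 : ∀ t ∈ I, -1 < q t 0 ∧ q t 0 < 1)
    (hqnz : ∀ t ∈ I, sp (q t) ≠ 0) :
    ∀ t ∈ I, ∀ s ∈ I, rl γ (q t, v t) = rl γ (q s, v s) :=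
  runge_lenz_is_integral_of_motion_general γ I hI q v hq hv hTS hqnz
end
end

section
/- For (q,v) ∈ TS³ with 𝐪 ≠ 0, q0 > 0 and E < 0, the vectors α, β ∈ ℝ⁴ satisfy ⟨α,α⟩ = 1, ⟨β,β⟩ = 1, and ⟨α,β⟩ = 0. Consequently, for any φ ∈ ℝ, the point (x,y) = (α sinφ + β cosφ, ν(−α cosφ + β sinφ)) lies in T⁺S³ = {(x,y) ∈ ℝ⁴×ℝ⁴ : ⟨x,x⟩ = 1, ⟨x,y⟩ = 0, y ≠ 0}. -/
/-!
Write `r = |𝐪|`, `s = 𝐪·𝛑` and `P = |𝛑|²`. On `TS³` we have `r² = 1 - q₀²`, and the Lagrange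
identity `|𝐪 × 𝐯|² = |𝐪|²|𝐯|² - (𝐪·𝐯)²` turns into `P = ⟨v,v⟩ - |𝛍|²`, so that
`-2E r = 2γq₀ - rP`; by the definition of `ν` this reads `ν² (2γq₀ - rP) = γ² r`.
Expanding `⟨α,α⟩` and `⟨β,β⟩` in terms of `r, s, P` and eliminating `ν²` with this relation
gives `1`, while `⟨α,β⟩ = 0` holds identically. The point `(x,y)` is then a rotation of the
orthonormal pair `(α, β)`, with `y` scaled by `ν ≠ 0`.
-/

open Matrix Real

noncomputable section

/-- The vector `α` of the Ligon–Schaaf map for the Kepler problem on `S³`. -/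
def alphaLS (γ : ℝ) (p : (Fin 4 → ℝ) × (Fin 4 → ℝ)) : Fin 4 → ℝ :=
  Fin.cons ((sp p.1 ⬝ᵥ pivec p) / (nuLS γ p * p.1 0))
    ((nrm3 (sp p.1))⁻¹ • sp p.1 - ((sp p.1 ⬝ᵥ pivec p) / (γ * p.1 0)) • pivec p)

/-- The vector `β` of the Ligon–Schaaf map for the Kepler problem on `S³`. -/
def betaLS (γ : ℝ) (p : (Fin 4 → ℝ) × (Fin 4 → ℝ)) : Fin 4 → ℝ :=
  Fin.cons (nrm3 (sp p.1) / (γ * p.1 0) * (pivec p ⬝ᵥ pivec p) - 1)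
    ((nrm3 (sp p.1) / (nuLS γ p * p.1 0)) • pivec p)

/-- The phase `φ = (𝐪·𝛑)/(ν q₀) = α₀` of the Ligon–Schaaf map. -/
def phiLS (γ : ℝ) (p : (Fin 4 → ℝ) × (Fin 4 → ℝ)) : ℝ :=
  (sp p.1 ⬝ᵥ pivec p) / (nuLS γ p * p.1 0)

/-- The Ligon–Schaaf map `Φ` for the Kepler problem on `S³`. -/
def PhiLS (γ : ℝ) (p : (Fin 4 → ℝ) × (Fin 4 → ℝ)) : (Fin 4 → ℝ) × (Fin 4 → ℝ) :=
  (Real.sin (phiLS γ p) • alphaLS γ p + Real.cos (phiLS γ p) • betaLS γ p,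
   nuLS γ p • (-Real.cos (phiLS γ p) • alphaLS γ p + Real.sin (phiLS γ p) • betaLS γ p))

section RotatedOrthonormalPair

variable {m : Type*} [Fintype m] {a b : m → ℝ}

theorem sin_smul_add_cos_smul_dotProduct_self (ha : a ⬝ᵥ a = 1) (hb : b ⬝ᵥ b = 1)
    (hab : a ⬝ᵥ b = 0) (φ : ℝ) :
    (sin φ • a + cos φ • b) ⬝ᵥ (sin φ • a + cos φ • b) = 1 := by
  simp only [add_dotProduct, dotProduct_add, smul_dotProduct, dotProduct_smul, smul_eq_mul,
    ha, hb, hab, dotProduct_comm b a]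
  linear_combination sin_sq_add_cos_sq φ

theorem neg_cos_smul_add_sin_smul_dotProduct_self (ha : a ⬝ᵥ a = 1) (hb : b ⬝ᵥ b = 1)
    (hab : a ⬝ᵥ b = 0) (φ : ℝ) :
    (-cos φ • a + sin φ • b) ⬝ᵥ (-cos φ • a + sin φ • b) = 1 := by
  simp only [add_dotProduct, dotProduct_add, smul_dotProduct, dotProduct_smul, smul_eq_mul,
    ha, hb, hab, dotProduct_comm b a]
  linear_combination sin_sq_add_cos_sq φ

theorem sin_smul_add_cos_smul_dotProduct_neg_cos_smul_add_sin_smul (ha : a ⬝ᵥ a = 1)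
    (hb : b ⬝ᵥ b = 1) (hab : a ⬝ᵥ b = 0) (φ : ℝ) :
    (sin φ • a + cos φ • b) ⬝ᵥ (-cos φ • a + sin φ • b) = 0 := by
  simp only [add_dotProduct, dotProduct_add, smul_dotProduct, dotProduct_smul, smul_eq_mul,
    ha, hb, hab, dotProduct_comm b a]
  ring

theorem neg_cos_smul_add_sin_smul_ne_zero (ha : a ⬝ᵥ a = 1) (hb : b ⬝ᵥ b = 1)
    (hab : a ⬝ᵥ b = 0) (φ : ℝ) : -cos φ • a + sin φ • b ≠ 0 := by
  intro h
  have := neg_cos_smul_add_sin_smul_dotProduct_self ha hb hab φ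
  rw [h, zero_dotProduct] at this
  exact zero_ne_one this

end RotatedOrthonormalPair

theorem dotProduct_eq_mul_add_sp_dotProduct_sp (x y : Fin 4 → ℝ) :
    x ⬝ᵥ y = x 0 * y 0 + sp x ⬝ᵥ sp y := by
  simp [dotProduct, Fin.sum_univ_succ, sp]

theorem nrm3_sq (x : Fin 3 → ℝ) : nrm3 x ^ 2 = x ⬝ᵥ x :=
  sq_sqrt (dotProduct_star_self_nonneg x)

theorem nrm3_pos {x : Fin 3 → ℝ} (hx : x ≠ 0) : 0 < nrm3 x :=
  sqrt_pos.2 <| (dotProduct_star_self_nonneg x).lt_of_ne' (dotProduct_self_eq_zero.not.2 hx)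

section TS3

variable {γ : ℝ} {p : (Fin 4 → ℝ) × (Fin 4 → ℝ)}

theorem sp_dotProduct_sp_of_mem_TS3 (hp : p ∈ TS3) :
    sp p.1 ⬝ᵥ sp p.1 = 1 - p.1 0 ^ 2 ∧ sp p.1 ⬝ᵥ sp p.2 = -(p.1 0 * p.2 0) := by
  obtain ⟨hqq, hqv⟩ := hp
  rw [dotProduct_eq_mul_add_sp_dotProduct_sp] at hqq hqv
  constructor <;> linarith

theorem pivec_dotProduct_pivec (hp : p ∈ TS3) :
    pivec p ⬝ᵥ pivec p = p.2 ⬝ᵥ p.2 - mu p ⬝ᵥ mu p := by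
  obtain ⟨hqq, hqv⟩ := sp_dotProduct_sp_of_mem_TS3 hp
  rw [pivec, mu, cross_dot_cross, dotProduct_eq_mul_add_sp_dotProduct_sp p.2]
  simp only [sub_dotProduct, dotProduct_sub, smul_dotProduct, dotProduct_smul, smul_eq_mul,
    dotProduct_comm (sp p.2) (sp p.1), hqq, hqv]
  ring

theorem neg_two_mul_Een_mul_nrm3 (hp : p ∈ TS3) (hq : sp p.1 ≠ 0) :
    -2 * Een γ p * nrm3 (sp p.1) =
      2 * γ * p.1 0 - nrm3 (sp p.1) * (pivec p ⬝ᵥ pivec p) := by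
  have hsqrt : √(1 - p.1 0 ^ 2) = nrm3 (sp p.1) := by
    rw [nrm3, (sp_dotProduct_sp_of_mem_TS3 hp).1]
  have hr := (nrm3_pos hq).ne'
  rw [Een, Hham, hsqrt, pivec_dotProduct_pivec hp]
  field_simp
  ring

theorem sqrt_neg_two_mul_Een_pos (hE : Een γ p < 0) : 0 < √(-2 * Een γ p) :=
  sqrt_pos.2 (by linarith)

theorem nuLS_ne_zero (hγ : γ ≠ 0) (hE : Een γ p < 0) : nuLS γ p ≠ 0 :=
  div_ne_zero hγ (sqrt_neg_two_mul_Een_pos hE).ne'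

theorem nuLS_sq_mul_eq (hp : p ∈ TS3) (hq : sp p.1 ≠ 0) (hE : Een γ p < 0) :
    nuLS γ p ^ 2 * (2 * γ * p.1 0 - nrm3 (sp p.1) * (pivec p ⬝ᵥ pivec p)) =
      γ ^ 2 * nrm3 (sp p.1) := by
  have hE' := hE.ne
  rw [← neg_two_mul_Een_mul_nrm3 hp hq, nuLS, div_pow, sq_sqrt (by linarith)]
  field_simp

theorem alphaLS_dotProduct_alphaLS (hγ : γ ≠ 0) (hp : p ∈ TS3) (hq : sp p.1 ≠ 0)
    (hq0 : p.1 0 ≠ 0) (hE : Een γ p < 0) : alphaLS γ p ⬝ᵥ alphaLS γ p = 1 := by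
  have key := nuLS_sq_mul_eq hp hq hE
  have hν := nuLS_ne_zero hγ hE
  have hr := (nrm3_pos hq).ne'
  rw [alphaLS, ← vecCons, cons_dotProduct_cons]
  simp only [sub_dotProduct, dotProduct_sub, smul_dotProduct, dotProduct_smul, smul_eq_mul,
    dotProduct_comm (pivec p) (sp p.1), ← nrm3_sq (sp p.1)]
  field_simp
  linear_combination (-(sp p.1 ⬝ᵥ pivec p) ^ 2) * key

theorem betaLS_dotProduct_betaLS (hγ : γ ≠ 0) (hp : p ∈ TS3) (hq : sp p.1 ≠ 0)
    (hq0 : p.1 0 ≠ 0) (hE : Een γ p < 0) : betaLS γ p ⬝ᵥ betaLS γ p = 1 := by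
  have key := nuLS_sq_mul_eq hp hq hE
  have hν := nuLS_ne_zero hγ hE
  rw [betaLS, ← vecCons, cons_dotProduct_cons]
  simp only [smul_dotProduct, dotProduct_smul, smul_eq_mul]
  field_simp
  linear_combination (-(nrm3 (sp p.1) * (pivec p ⬝ᵥ pivec p))) * key

theorem alphaLS_dotProduct_betaLS (hq : sp p.1 ≠ 0) : alphaLS γ p ⬝ᵥ betaLS γ p = 0 := by
  have hr := (nrm3_pos hq).ne'
  rw [alphaLS, betaLS, ← vecCons, ← vecCons, cons_dotProduct_cons]
  simp only [sub_dotProduct, smul_dotProduct, dotProduct_smul, smul_eq_mul]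
  field_simp
  ring

end TS3

theorem LS_alpha_beta_orthonormal (γ : ℝ) (hγ : 0 < γ)
    (p : (Fin 4 → ℝ) × (Fin 4 → ℝ)) (hp : p ∈ TS3) (hqnz : sp p.1 ≠ 0)
    (hq0 : 0 < p.1 0) (hE : Een γ p < 0) (φ : ℝ) :
    alphaLS γ p ⬝ᵥ alphaLS γ p = 1 ∧
    betaLS γ p ⬝ᵥ betaLS γ p = 1 ∧
    alphaLS γ p ⬝ᵥ betaLS γ p = 0 ∧
    ((Real.sin φ • alphaLS γ p + Real.cos φ • betaLS γ p) ⬝ᵥ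
        (Real.sin φ • alphaLS γ p + Real.cos φ • betaLS γ p) = 1 ∧
      (Real.sin φ • alphaLS γ p + Real.cos φ • betaLS γ p) ⬝ᵥ
        (nuLS γ p • (-Real.cos φ • alphaLS γ p + Real.sin φ • betaLS γ p)) = 0 ∧
      nuLS γ p • (-Real.cos φ • alphaLS γ p + Real.sin φ • betaLS γ p) ≠ 0) := by
  have haa := alphaLS_dotProduct_alphaLS hγ.ne' hp hqnz hq0.ne' hE
  have hbb := betaLS_dotProduct_betaLS hγ.ne' hp hqnz hq0.ne' hE
  have hab : alphaLS γ p ⬝ᵥ betaLS γ p = 0 := alphaLS_dotProduct_betaLS hqnz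
  refine ⟨haa, hbb, hab, sin_smul_add_cos_smul_dotProduct_self haa hbb hab φ, ?_,
    smul_ne_zero (nuLS_ne_zero hγ.ne' hE) (neg_cos_smul_add_sin_smul_ne_zero haa hbb hab φ)⟩
  rw [dotProduct_smul, sin_smul_add_cos_smul_dotProduct_neg_cos_smul_add_sin_smul haa hbb hab,
    smul_zero]

end
end

section
/- The Ligon–Schaaf map for the Kepler problem on S³ factors through the gnomonic map: for every (q,v) ∈ TS³ with q0 > 0, 𝐪 ≠ 0 and E < 0, one has Φ_c(Ψ(q,v)) = Φ(q,v), where Φ is the spherical Ligon–Schaaf map, Φ_c is the Euclidean Ligon–Schaaf map, and Ψ is the gnomonic map. -/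
open Matrix Real

noncomputable section

/-- The gnomonic map `Ψ(q,v) = (𝐐,𝐕) = (𝐪/q₀, 𝛑)`. -/
def Psi (p : (Fin 4 → ℝ) × (Fin 4 → ℝ)) : (Fin 3 → ℝ) × (Fin 3 → ℝ) :=
  ((p.1 0)⁻¹ • sp p.1, pivec p)

/-- The Euclidean Kepler Hamiltonian `H_K(𝐐,𝐕) = ½ 𝐕·𝐕 - γ/|𝐐|`. -/
def HK (γ : ℝ) (QV : (Fin 3 → ℝ) × (Fin 3 → ℝ)) : ℝ :=
  (1 / 2) * (QV.2 ⬝ᵥ QV.2) - γ / nrm3 QV.1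

/-- `ν_c = γ/√(-2 H_K)` for the Euclidean Ligon–Schaaf map. -/
def nuc (γ : ℝ) (QV : (Fin 3 → ℝ) × (Fin 3 → ℝ)) : ℝ := γ / Real.sqrt (-2 * HK γ QV)

/-- The vector `α_c` of the Euclidean Ligon–Schaaf map. -/
def alphac (γ : ℝ) (QV : (Fin 3 → ℝ) × (Fin 3 → ℝ)) : Fin 4 → ℝ :=
  Fin.cons ((QV.2 ⬝ᵥ QV.1) / nuc γ QV)
    ((nrm3 QV.1)⁻¹ • QV.1 - ((QV.2 ⬝ᵥ QV.1) / γ) • QV.2)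

/-- The vector `β_c` of the Euclidean Ligon–Schaaf map. -/
def betac (γ : ℝ) (QV : (Fin 3 → ℝ) × (Fin 3 → ℝ)) : Fin 4 → ℝ :=
  Fin.cons (nrm3 QV.1 / γ * (QV.2 ⬝ᵥ QV.2) - 1) ((nrm3 QV.1 / nuc γ QV) • QV.2)

/-- The phase `φ_c = α_{c,0}` of the Euclidean Ligon–Schaaf map. -/
def phicLS (γ : ℝ) (QV : (Fin 3 → ℝ) × (Fin 3 → ℝ)) : ℝ := (QV.2 ⬝ᵥ QV.1) / nuc γ QV

/-- The Euclidean Ligon–Schaaf map `Φ_c`. -/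
def Phic (γ : ℝ) (QV : (Fin 3 → ℝ) × (Fin 3 → ℝ)) : (Fin 4 → ℝ) × (Fin 4 → ℝ) :=
  (Real.sin (phicLS γ QV) • alphac γ QV + Real.cos (phicLS γ QV) • betac γ QV,
   nuc γ QV • (-Real.cos (phicLS γ QV) • alphac γ QV + Real.sin (phicLS γ QV) • betac γ QV))

/-! On `TS³` the gnomonic map sends the data of the spherical Ligon–Schaaf map to those of the
Euclidean one: `|𝐐| = |𝐪|/q₀`, `𝐕·𝐐 = (𝐪·𝛑)/q₀`, and by the Lagrange identity
`|𝛑|² + |𝛍|² = |q|²|v|² - ⟨q,v⟩² = ⟨v,v⟩` together with `|𝐪| = (1 - q₀²)^{1/2}` the Kepler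
energy `H_K ∘ Ψ` is `E`. Hence `ν_c ∘ Ψ = ν`, `φ_c ∘ Ψ = φ`, `α_c ∘ Ψ = α`, `β_c ∘ Ψ = β`. -/

theorem dotProduct_eq_mul_add_sp_dotProduct (q w : Fin 4 → ℝ) :
    q ⬝ᵥ w = q 0 * w 0 + sp q ⬝ᵥ sp w := by
  simp only [dotProduct, Fin.sum_univ_succ (n := 3), sp]

theorem nrm3_smul (c : ℝ) (x : Fin 3 → ℝ) : nrm3 (c • x) = |c| * nrm3 x := by
  rw [nrm3, nrm3, smul_dotProduct, dotProduct_smul, smul_eq_mul, smul_eq_mul, ← mul_assoc,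
    Real.sqrt_mul (mul_self_nonneg c), Real.sqrt_mul_self_eq_abs]

/-- The Lagrange identity for `q ∧ v`, split into its `e₀ ∧ ℝ³` part `𝛑` and its `Λ²ℝ³` part `𝛍`. -/
theorem pivec_dotProduct_self_add_mu_dotProduct_self (p : (Fin 4 → ℝ) × (Fin 4 → ℝ)) :
    pivec p ⬝ᵥ pivec p + mu p ⬝ᵥ mu p
      = (p.1 ⬝ᵥ p.1) * (p.2 ⬝ᵥ p.2) - (p.1 ⬝ᵥ p.2) ^ 2 := by
  simp only [pivec, mu, cross_dot_cross, sub_dotProduct, dotProduct_sub, smul_dotProduct,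
    dotProduct_smul, smul_eq_mul, dotProduct_eq_mul_add_sp_dotProduct p.1,
    dotProduct_eq_mul_add_sp_dotProduct p.2, dotProduct_comm (sp p.2) (sp p.1)]
  ring

section Gnomonic

variable {p : (Fin 4 → ℝ) × (Fin 4 → ℝ)}

theorem sp_dotProduct_self_of_mem_TS3 (hp : p ∈ TS3) :
    sp p.1 ⬝ᵥ sp p.1 = 1 - p.1 0 ^ 2 := by
  have h := hp.1
  rw [dotProduct_eq_mul_add_sp_dotProduct] at h
  linarith

theorem nrm3_Psi_fst (hq0 : 0 < p.1 0) : nrm3 (Psi p).1 = nrm3 (sp p.1) / p.1 0 := by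
  rw [Psi, nrm3_smul, abs_inv, abs_of_pos hq0, inv_mul_eq_div]

theorem Psi_snd_dotProduct_Psi_fst (p : (Fin 4 → ℝ) × (Fin 4 → ℝ)) :
    (Psi p).2 ⬝ᵥ (Psi p).1 = (sp p.1 ⬝ᵥ pivec p) / p.1 0 := by
  rw [Psi, dotProduct_smul, smul_eq_mul, dotProduct_comm, inv_mul_eq_div]

theorem HK_Psi (γ : ℝ) (hp : p ∈ TS3) (hq0 : 0 < p.1 0) : HK γ (Psi p) = Een γ p := by
  have hnrm : Real.sqrt (1 - p.1 0 ^ 2) = nrm3 (sp p.1) := by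
    rw [nrm3, sp_dotProduct_self_of_mem_TS3 hp]
  have hlagrange : pivec p ⬝ᵥ pivec p + mu p ⬝ᵥ mu p = p.2 ⬝ᵥ p.2 := by
    rw [pivec_dotProduct_self_add_mu_dotProduct_self, hp.1, hp.2]
    ring
  rw [HK, Een, Hham, nrm3_Psi_fst hq0, hnrm, div_div_eq_mul_div]
  simp only [Psi]
  linear_combination (1 / 2 : ℝ) * hlagrange

theorem nuc_Psi (γ : ℝ) (hp : p ∈ TS3) (hq0 : 0 < p.1 0) : nuc γ (Psi p) = nuLS γ p := by
  rw [nuc, nuLS, HK_Psi γ hp hq0]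

theorem phicLS_Psi (γ : ℝ) (hp : p ∈ TS3) (hq0 : 0 < p.1 0) :
    phicLS γ (Psi p) = phiLS γ p := by
  rw [phicLS, phiLS, Psi_snd_dotProduct_Psi_fst, nuc_Psi γ hp hq0, div_div, mul_comm]

theorem alphac_Psi (γ : ℝ) (hp : p ∈ TS3) (hq0 : 0 < p.1 0) :
    alphac γ (Psi p) = alphaLS γ p := by
  have hscale : (nrm3 (sp p.1) / p.1 0)⁻¹ * (p.1 0)⁻¹ = (nrm3 (sp p.1))⁻¹ := by
    rw [inv_div, div_mul_eq_mul_div, mul_inv_cancel₀ hq0.ne', one_div]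
  rw [alphac, alphaLS, Psi_snd_dotProduct_Psi_fst, nuc_Psi γ hp hq0, nrm3_Psi_fst hq0]
  simp only [Psi, smul_smul, hscale, div_div, mul_comm (p.1 0)]

theorem betac_Psi (γ : ℝ) (hp : p ∈ TS3) (hq0 : 0 < p.1 0) :
    betac γ (Psi p) = betaLS γ p := by
  rw [betac, betaLS, nuc_Psi γ hp hq0, nrm3_Psi_fst hq0]
  simp only [Psi, div_div, mul_comm (p.1 0)]

end Gnomonic

theorem LS_map_factors_through_gnomonic_general (γ : ℝ)
    (p : (Fin 4 → ℝ) × (Fin 4 → ℝ)) (hp : p ∈ TS3) (hq0 : 0 < p.1 0) :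
    Phic γ (Psi p) = PhiLS γ p := by
  rw [Phic, PhiLS, phicLS_Psi γ hp hq0, alphac_Psi γ hp hq0, betac_Psi γ hp hq0,
    nuc_Psi γ hp hq0]

theorem LS_map_factors_through_gnomonic (γ : ℝ) (hγ : 0 < γ)
    (p : (Fin 4 → ℝ) × (Fin 4 → ℝ)) (hp : p ∈ TS3) (hq0 : 0 < p.1 0)
    (hqnz : sp p.1 ≠ 0) (hE : Een γ p < 0) :
    Phic γ (Psi p) = PhiLS γ p :=
  LS_map_factors_through_gnomonic_general γ p hp hq0

end
end
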